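/- arXiv:2203.12959 — 3 statements merged into one kernel-verified Lean document; each statement's English description precedes it below -/
import Mathlib

section
/- Let Π ∈ Π_{q,r}. Then the set Z_r⁺(Π) is nonempty if and only if the generalized Schur complement Π|Π₂₂ is positive definite. -/
open Matrix
open scoped Classical

/-- The Moore–Penrose pseudoinverse of a real matrix, defined via its four
characterizing Penrose conditions (which determine it uniquely). -/
noncomputable def pinv {m n : ℕ} (A : Matrix (Fin m) (Fin n) ℝ) : Matrix (Fin n) (Fin m) ℝ :=
  if h : ∃ B : Matrix (Fin n) (Fin m) ℝ,
      A * B * A = A ∧ B * A * B = B ∧ (A * B)ᵀ = A * B ∧ (B * A)ᵀ = B * A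
  then h.choose else 0

/-- The unique positive semidefinite square root of a positive semidefinite matrix
(defined by its characterizing property, which determines it uniquely). -/
noncomputable def msqrt {n : ℕ} (A : Matrix (Fin n) (Fin n) ℝ) : Matrix (Fin n) (Fin n) ℝ :=
  if h : ∃ B : Matrix (Fin n) (Fin n) ℝ, B.PosSemidef ∧ B * B = A then h.choose else 0

/-- The quadratic matrix expression `[I; Z]ᵀ Π [I; Z]`. -/
noncomputable def qmi {q r : ℕ} (P : Matrix (Fin q ⊕ Fin r) (Fin q ⊕ Fin r) ℝ)
    (Z : Matrix (Fin r) (Fin q) ℝ) : Matrix (Fin q) (Fin q) ℝ :=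
  (fromRows (1 : Matrix (Fin q) (Fin q) ℝ) Z)ᵀ * P * fromRows 1 Z

/-- The solution set `Z_r(Π)` of the nonstrict QMI. -/
def ZrSet {q r : ℕ} (P : Matrix (Fin q ⊕ Fin r) (Fin q ⊕ Fin r) ℝ) :
    Set (Matrix (Fin r) (Fin q) ℝ) := {Z | (qmi P Z).PosSemidef}

/-- The solution set `Z_r⁺(Π)` of the strict QMI. -/
def ZrPlusSet {q r : ℕ} (P : Matrix (Fin q ⊕ Fin r) (Fin q ⊕ Fin r) ℝ) :
    Set (Matrix (Fin r) (Fin q) ℝ) := {Z | (qmi P Z).PosDef}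

/-- The solution set `Z_r⁰(Π)` of the quadratic matrix equality. -/
def ZrZeroSet {q r : ℕ} (P : Matrix (Fin q ⊕ Fin r) (Fin q ⊕ Fin r) ℝ) :
    Set (Matrix (Fin r) (Fin q) ℝ) := {Z | qmi P Z = 0}

/-- Generalized Schur complement `Π|Π₂₂ = Π₁₁ − Π₁₂ Π₂₂^† Π₂₁`. -/
noncomputable def schurC {q r : ℕ} (P : Matrix (Fin q ⊕ Fin r) (Fin q ⊕ Fin r) ℝ) :
    Matrix (Fin q) (Fin q) ℝ :=
  P.toBlocks₁₁ - P.toBlocks₁₂ * pinv P.toBlocks₂₂ * P.toBlocks₂₁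

/-- Membership in the class `Π_{q,r}`: symmetric, `Π₂₂ ⪯ 0`, `Π|Π₂₂ ⪰ 0`,
and `ker Π₂₂ ⊆ ker Π₁₂`. -/
def memPi {q r : ℕ} (P : Matrix (Fin q ⊕ Fin r) (Fin q ⊕ Fin r) ℝ) : Prop :=
  P.IsSymm ∧ (-P.toBlocks₂₂).PosSemidef ∧ (schurC P).PosSemidef ∧
    ∀ x : Fin r → ℝ, P.toBlocks₂₂ *ᵥ x = 0 → P.toBlocks₁₂ *ᵥ x = 0

/-!
Write `Π = [[A, K], [Kᵀ, N]]` and let `G` be any generalized inverse of `N` (`N G N = N`), e.g.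
`G = N^†`. The kernel condition `ker N ⊆ ker K` says that `K = K Gᵀ N`, and this is exactly what
is needed to complete the square:
`[I; Z]ᵀ Π [I; Z] = (A - K G Kᵀ) + (Z + G Kᵀ)ᵀ N (Z + G Kᵀ)`.
Since `N ⪯ 0`, every strict solution `Z` forces `Π|Π₂₂ ≻ 0`; conversely `Z = -G Kᵀ` turns the
quadratic matrix expression into `Π|Π₂₂` itself.
-/

-- `x ↦ x⁻¹` is a Penrose inverse of every real number because `0⁻¹ = 0`; apply it to `A`.
theorem Matrix.IsSymm.exists_penrose_inverse {n : Type*} [Fintype n] {A : Matrix n n ℝ}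
    (hA : A.IsSymm) :
    ∃ B : Matrix n n ℝ,
      A * B * A = A ∧ B * A * B = B ∧ (A * B)ᵀ = A * B ∧ (B * A)ᵀ = B * A := by
  classical
  have hsa : IsSelfAdjoint A := by
    rw [IsSelfAdjoint, star_eq_conjTranspose, conjTranspose_eq_transpose_of_trivial]
    exact hA
  have hcont (f : ℝ → ℝ) : ContinuousOn f (spectrum ℝ A) :=
    A.finite_real_spectrum.continuousOn f
  have hsymm (f : ℝ → ℝ) : (cfc f A)ᵀ = cfc f A := by
    rw [← conjTranspose_eq_transpose_of_trivial, ← star_eq_conjTranspose]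
    exact (cfc_predicate f A).star_eq
  have hmul (f g : ℝ → ℝ) : cfc (fun x => f x * g x) A = cfc f A * cfc g A :=
    cfc_mul f g A (hcont f) (hcont g)
  have hid : cfc (fun x : ℝ => x) A = A := cfc_id' ℝ A
  refine ⟨cfc (fun x : ℝ => x⁻¹) A, ?_, ?_, ?_, ?_⟩
  · calc _ = cfc (fun x : ℝ => x * x⁻¹ * x) A := by rw [hmul, hmul, hid]
      _ = A := by simp only [mul_inv_mul_cancel, hid]
  · calc _ = cfc (fun x : ℝ => x⁻¹ * x * x⁻¹) A := by rw [hmul, hmul, hid]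
      _ = _ := by congr 1; ext x; simpa only [inv_inv] using mul_inv_mul_cancel x⁻¹
  · calc _ = (cfc (fun x : ℝ => x * x⁻¹) A)ᵀ := by rw [hmul, hid]
      _ = _ := by rw [hsymm, hmul, hid]
  · calc _ = (cfc (fun x : ℝ => x⁻¹ * x) A)ᵀ := by rw [hmul, hid]
      _ = _ := by rw [hsymm, hmul, hid]

theorem Matrix.IsSymm.mul_pinv_mul {n : ℕ} {A : Matrix (Fin n) (Fin n) ℝ} (hA : A.IsSymm) :
    A * pinv A * A = A := by
  rw [pinv, dif_pos hA.exists_penrose_inverse]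
  exact hA.exists_penrose_inverse.choose_spec.1

section CompletingTheSquare

variable {R m r : Type*} [CommRing R] [Fintype r]

theorem Matrix.mul_mul_eq_self_of_ker_le {K : Matrix m r R}
    {N G : Matrix r r R} (hG : N * G * N = N) (hker : ∀ x, N *ᵥ x = 0 → K *ᵥ x = 0) :
    K * G * N = K := by
  refine ext_iff_mulVec.mpr fun x => ?_
  have hx : N *ᵥ (x - (G * N) *ᵥ x) = 0 := by
    rw [mulVec_sub, mulVec_mulVec, ← Matrix.mul_assoc, hG, sub_self]
  have hKx := hker _ hx
  rw [mulVec_sub, mulVec_mulVec, sub_eq_zero, ← Matrix.mul_assoc] at hKx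
  exact hKx.symm

theorem Matrix.complete_square_of_ker_le {A : Matrix m m R} {K : Matrix m r R}
    {N G : Matrix r r R} (hN : N.IsSymm) (hG : N * G * N = N)
    (hker : ∀ x, N *ᵥ x = 0 → K *ᵥ x = 0) (Z : Matrix r m R) :
    A + K * Z + Zᵀ * Kᵀ + Zᵀ * N * Z
      = (A - K * G * Kᵀ) + (Z + G * Kᵀ)ᵀ * N * (Z + G * Kᵀ) := by
  have hGt : N * Gᵀ * N = N := by
    simpa only [transpose_mul, hN.eq, Matrix.mul_assoc] using congrArg transpose hG
  have hK : K * Gᵀ * N = K := mul_mul_eq_self_of_ker_le hGt hker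
  have hKt : N * G * Kᵀ = Kᵀ := by
    simpa only [transpose_mul, transpose_transpose, hN.eq, Matrix.mul_assoc]
      using congrArg transpose hK
  calc A + K * Z + Zᵀ * Kᵀ + Zᵀ * N * Z
      = A + (K * Gᵀ * N) * Z + Zᵀ * (N * G * Kᵀ) + Zᵀ * N * Z := by rw [hK, hKt]
    _ = (A - K * G * Kᵀ) + (Z + G * Kᵀ)ᵀ * N * (Z + G * Kᵀ) := by
      rw [transpose_add, transpose_mul, transpose_transpose]
      simp only [Matrix.add_mul, Matrix.mul_add, ← Matrix.mul_assoc, hK]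
      abel

end CompletingTheSquare

theorem qmi_eq_toBlocks {q r : ℕ} (P : Matrix (Fin q ⊕ Fin r) (Fin q ⊕ Fin r) ℝ)
    (Z : Matrix (Fin r) (Fin q) ℝ) :
    qmi P Z = P.toBlocks₁₁ + P.toBlocks₁₂ * Z + Zᵀ * P.toBlocks₂₁ + Zᵀ * P.toBlocks₂₂ * Z := by
  conv_lhs => rw [qmi, ← fromBlocks_toBlocks P]
  rw [transpose_fromRows, transpose_one, fromCols_mul_fromBlocks]
  refine (fromCols_mul_fromRows _ _ _ _).trans ?_
  simp only [Matrix.mul_one, Matrix.one_mul, Matrix.add_mul]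
  abel

theorem qmi_eq_schurC_add {q r : ℕ} {P : Matrix (Fin q ⊕ Fin r) (Fin q ⊕ Fin r) ℝ}
    (hP : P.IsSymm) (hker : ∀ x, P.toBlocks₂₂ *ᵥ x = 0 → P.toBlocks₁₂ *ᵥ x = 0)
    (Z : Matrix (Fin r) (Fin q) ℝ) :
    qmi P Z = schurC P + (Z + pinv P.toBlocks₂₂ * P.toBlocks₂₁)ᵀ * P.toBlocks₂₂ *
      (Z + pinv P.toBlocks₂₂ * P.toBlocks₂₁) := by
  have h₂₁ : P.toBlocks₂₁ = P.toBlocks₁₂ᵀ := by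
    ext i j
    exact hP.apply (Sum.inl j) (Sum.inr i)
  have h₂₂ : P.toBlocks₂₂.IsSymm := hP.submatrix Sum.inr
  rw [qmi_eq_toBlocks, schurC, h₂₁]
  exact complete_square_of_ker_le h₂₂ h₂₂.mul_pinv_mul hker Z

/-- For `Π ∈ Π_{q,r}`, the set `Z_r⁺(Π)` is nonempty
if and only if `Π|Π₂₂` is positive definite. -/
theorem stmt_3 {q r : ℕ} (P : Matrix (Fin q ⊕ Fin r) (Fin q ⊕ Fin r) ℝ) (hP : memPi P) :
    (ZrPlusSet P).Nonempty ↔ (schurC P).PosDef := by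
  obtain ⟨hsym, hneg, -, hker⟩ := hP
  set W := pinv P.toBlocks₂₂ * P.toBlocks₂₁
  constructor
  · rintro ⟨Z, hZ⟩
    have hsplit : schurC P = qmi P Z + (Z + W)ᴴ * (-P.toBlocks₂₂) * (Z + W) := by
      rw [qmi_eq_schurC_add hsym hker, conjTranspose_eq_transpose_of_trivial]
      simp only [Matrix.mul_neg, Matrix.neg_mul]
      abel
    rw [hsplit]
    exact hZ.add_posSemidef (hneg.conjTranspose_mul_mul_same _)
  · intro hS
    refine ⟨-W, ?_⟩
    show (qmi P (-W)).PosDef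
    rw [qmi_eq_schurC_add hsym hker, neg_add_cancel]
    simpa only [Matrix.mul_zero, add_zero] using hS
end

section
/- Let Π ∈ Π_{q,r}. Then Z ∈ Z_r(Π) if and only if Z = −Π₂₂^† Π₂₁ + ((−Π₂₂)^†)^{1/2} S (Π|Π₂₂)^{1/2} + (I_r − Π₂₂^† Π₂₂) T for some matrices S, T ∈ ℝ^{r×q} with SᵀS ⪯ I_q. Here M^{1/2} denotes the unique positive semidefinite square root of a positive semidefinite matrix M. -/
/-!
Put `N = -Π₂₂` and `W = Z + Π₂₂^† Π₂₁`. Because `ker Π₂₂ ⊆ ker Π₁₂`, completing the square gives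
`[I; Z]ᵀ Π [I; Z] = Π|Π₂₂ - Wᵀ N W`, so with `H = (Π|Π₂₂)^{1/2}` the inequality reads
`(N^{1/2} W)ᵀ (N^{1/2} W) ⪯ Hᵀ H`. By Douglas' lemma this holds iff `N^{1/2} W = S H` for some
`S` with `SᵀS ⪯ I`. Multiplying by `(N^†)^{1/2}` recovers the component `N^† N W` of `W` in the
range of `N`; the component `(I - N^† N) W` in `ker N` is unconstrained.
-/

open Matrix
open scoped Classical

open scoped MatrixOrder

namespace Matrix

theorem IsHermitian.transpose_eq {n : Type*} {A : Matrix n n ℝ} (hA : A.IsHermitian) : Aᵀ = A :=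
  isHermitian_iff_isSymm.mp hA

theorem IsSymm.toBlocks₂₁_eq {α m n : Type*} {P : Matrix (m ⊕ n) (m ⊕ n) α} (hP : P.IsSymm) :
    P.toBlocks₂₁ = P.toBlocks₁₂ᵀ := by
  ext i j
  exact (hP.apply (Sum.inr i) (Sum.inl j)).symm

section Real
variable {m n : Type*} [Fintype m] [Fintype n]

theorem posSemidef_transpose_mul_self (X : Matrix m n ℝ) : (Xᵀ * X).PosSemidef := by
  simpa using posSemidef_conjTranspose_mul_self X

theorem PosSemidef.transpose_mul_mul_same {A : Matrix n n ℝ} (hA : A.PosSemidef)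
    (X : Matrix n m ℝ) : (Xᵀ * A * X).PosSemidef := by
  simpa using hA.conjTranspose_mul_mul_same X

theorem eq_zero_of_posSemidef_neg_transpose_mul_self {X : Matrix m n ℝ}
    (h : (-(Xᵀ * X)).PosSemidef) : X = 0 := by
  have h₀ : Xᵀ * X = 0 :=
    le_antisymm (neg_nonneg.mp h.nonneg) X.posSemidef_transpose_mul_self.nonneg
  simpa using (conjTranspose_mul_self_eq_zero (A := X)).mp (by simpa using h₀)

variable [DecidableEq n]

theorem cfc_mul_cfc (f g : ℝ → ℝ) (A : Matrix n n ℝ) :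
    cfc f A * cfc g A = cfc (fun x => f x * g x) A :=
  (cfc_mul f g A (A.finite_real_spectrum.continuousOn f)
    (A.finite_real_spectrum.continuousOn g)).symm

theorem transpose_cfc (f : ℝ → ℝ) (A : Matrix n n ℝ) : (cfc f A)ᵀ = cfc f A :=
  (cfc_predicate f A).isHermitian.transpose_eq

end Real

end Matrix

def IsMoorePenroseInverse {m n : ℕ} (A : Matrix (Fin m) (Fin n) ℝ)
    (B : Matrix (Fin n) (Fin m) ℝ) : Prop :=
  A * B * A = A ∧ B * A * B = B ∧ (A * B)ᵀ = A * B ∧ (B * A)ᵀ = B * A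

namespace IsMoorePenroseInverse
variable {m n : ℕ} {A : Matrix (Fin m) (Fin n) ℝ} {B C : Matrix (Fin n) (Fin m) ℝ}

theorem transpose (h : IsMoorePenroseInverse A B) : IsMoorePenroseInverse Aᵀ Bᵀ := by
  obtain ⟨h₁, h₂, h₃, h₄⟩ := h
  refine ⟨?_, ?_, ?_, ?_⟩
  · rw [← transpose_mul, ← transpose_mul, ← Matrix.mul_assoc, h₁]
  · rw [← transpose_mul, ← transpose_mul, ← Matrix.mul_assoc, h₂]
  · rw [← transpose_mul, transpose_transpose, h₄]
  · rw [← transpose_mul, transpose_transpose, h₃]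

theorem neg (h : IsMoorePenroseInverse A B) : IsMoorePenroseInverse (-A) (-B) := by
  obtain ⟨h₁, h₂, h₃, h₄⟩ := h
  refine ⟨?_, ?_, ?_, ?_⟩ <;>
    simp only [Matrix.neg_mul, Matrix.mul_neg, neg_neg, h₁, h₂, h₃, h₄]

theorem mul_left_eq (hB : IsMoorePenroseInverse A B) (hC : IsMoorePenroseInverse A C) :
    A * B = A * C :=
  calc A * B = (A * C * A * B)ᵀ := by rw [hC.1, hB.2.2.1]
    _ = (A * B)ᵀ * (A * C)ᵀ := by rw [← transpose_mul, Matrix.mul_assoc (A * C)]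
    _ = A * C := by rw [hB.2.2.1, hC.2.2.1, ← Matrix.mul_assoc, hB.1]

theorem unique (hB : IsMoorePenroseInverse A B) (hC : IsMoorePenroseInverse A C) : B = C := by
  have hBA : B * A = C * A := by
    simpa only [← transpose_mul, transpose_transpose] using
      congrArg Matrix.transpose (hB.transpose.mul_left_eq hC.transpose)
  calc B = B * A * B := hB.2.1.symm
    _ = C * A * C := by rw [Matrix.mul_assoc, hB.mul_left_eq hC, ← Matrix.mul_assoc, hBA]
    _ = C := hC.2.1

theorem pinv_eq (h : IsMoorePenroseInverse A B) : pinv A = B := by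
  rw [pinv, dif_pos ⟨B, h⟩]
  exact IsMoorePenroseInverse.unique (Exists.choose_spec _) h

theorem posSemidef_one_sub_mul (h : IsMoorePenroseInverse A B) : (1 - B * A).PosSemidef := by
  have hE : 1 - B * A = (1 - B * A)ᵀ * (1 - B * A) := by
    rw [transpose_sub, transpose_one, h.2.2.2, Matrix.sub_mul, Matrix.one_mul, Matrix.mul_sub,
      Matrix.mul_one, ← Matrix.mul_assoc, h.2.1, sub_self, sub_zero]
  rw [hE]
  exact posSemidef_transpose_mul_self _

end IsMoorePenroseInverse

section FunctionalCalculus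
variable {n : ℕ}

-- Since `0⁻¹ = 0` in `ℝ`, `x ↦ x⁻¹` is the Moore–Penrose inverse of a scalar.
theorem isMoorePenroseInverse_cfc (f : ℝ → ℝ) (A : Matrix (Fin n) (Fin n) ℝ) :
    IsMoorePenroseInverse (cfc f A) (cfc (fun x => (f x)⁻¹) A) := by
  refine ⟨?_, ?_, ?_, ?_⟩
  · simp only [cfc_mul_cfc, mul_inv_mul_cancel]
  · simp only [cfc_mul_cfc]
    congr 1 with x
    simpa only [inv_inv] using mul_inv_mul_cancel (f x)⁻¹
  all_goals simp only [cfc_mul_cfc, transpose_cfc]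

theorem pinv_cfc (f : ℝ → ℝ) (A : Matrix (Fin n) (Fin n) ℝ) :
    pinv (cfc f A) = cfc (fun x => (f x)⁻¹) A :=
  (isMoorePenroseInverse_cfc f A).pinv_eq

theorem msqrt_eq_of_mul_self {A B : Matrix (Fin n) (Fin n) ℝ} (hB : B.PosSemidef)
    (hBB : B * B = A) : msqrt A = B := by
  have hex : ∃ B : Matrix (Fin n) (Fin n) ℝ, B.PosSemidef ∧ B * B = A := ⟨B, hB, hBB⟩
  rw [msqrt, dif_pos hex, ← CFC.sqrt_unique hBB hB.nonneg,
    CFC.sqrt_unique hex.choose_spec.2 hex.choose_spec.1.nonneg]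

theorem posSemidef_msqrt (A : Matrix (Fin n) (Fin n) ℝ) : (msqrt A).PosSemidef := by
  unfold msqrt
  split_ifs with h
  exacts [h.choose_spec.1, .zero]

theorem msqrt_cfc (f : ℝ → ℝ) (A : Matrix (Fin n) (Fin n) ℝ)
    (hf : ∀ x ∈ spectrum ℝ A, 0 ≤ f x) : msqrt (cfc f A) = cfc (fun x => √(f x)) A := by
  refine msqrt_eq_of_mul_self (cfc_nonneg fun x _ => Real.sqrt_nonneg _).posSemidef ?_
  rw [cfc_mul_cfc]
  exact cfc_congr fun x hx => Real.mul_self_sqrt (hf x hx)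

end FunctionalCalculus

namespace Matrix
variable {n : ℕ} {A : Matrix (Fin n) (Fin n) ℝ}

theorem IsHermitian.pinv_eq_cfc_inv (hA : A.IsHermitian) : pinv A = cfc (·⁻¹ : ℝ → ℝ) A := by
  conv_lhs => rw [← cfc_id' ℝ A hA.isSelfAdjoint]
  exact pinv_cfc _ A

theorem IsHermitian.isMoorePenroseInverse_pinv (hA : A.IsHermitian) :
    IsMoorePenroseInverse A (pinv A) := by
  rw [hA.pinv_eq_cfc_inv]
  conv => arg 1; rw [← cfc_id' ℝ A hA.isSelfAdjoint]
  exact isMoorePenroseInverse_cfc _ A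

theorem IsHermitian.transpose_pinv (hA : A.IsHermitian) : (pinv A)ᵀ = pinv A := by
  rw [hA.pinv_eq_cfc_inv, transpose_cfc]

theorem IsHermitian.pinv_neg (hA : A.IsHermitian) : pinv (-A) = -pinv A :=
  hA.isMoorePenroseInverse_pinv.neg.pinv_eq

theorem PosSemidef.msqrt_eq_cfc_sqrt (hA : A.PosSemidef) : msqrt A = cfc Real.sqrt A := by
  conv_lhs => rw [← cfc_id' ℝ A hA.isHermitian.isSelfAdjoint]
  exact msqrt_cfc _ A fun x hx => spectrum_nonneg_of_nonneg hA.nonneg hx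

theorem PosSemidef.msqrt_mul_self (hA : A.PosSemidef) : msqrt A * msqrt A = A := by
  rw [hA.msqrt_eq_cfc_sqrt, cfc_mul_cfc]
  conv_rhs => rw [← cfc_id' ℝ A hA.isHermitian.isSelfAdjoint]
  exact cfc_congr fun x hx => Real.mul_self_sqrt (spectrum_nonneg_of_nonneg hA.nonneg hx)

theorem PosSemidef.msqrt_pinv_mul_msqrt (hA : A.PosSemidef) :
    msqrt (pinv A) * msqrt A = pinv A * A := by
  have hA₀ : ∀ x ∈ spectrum ℝ A, 0 ≤ x := fun x hx => spectrum_nonneg_of_nonneg hA.nonneg hx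
  rw [← cfc_id' ℝ A hA.isHermitian.isSelfAdjoint, pinv_cfc, msqrt_cfc _ _ hA₀,
    msqrt_cfc _ _ fun x hx => inv_nonneg.2 (hA₀ x hx), cfc_mul_cfc, cfc_mul_cfc]
  refine cfc_congr fun x hx => ?_
  rcases eq_or_ne x 0 with rfl | hx₀
  · simp
  · rw [← Real.sqrt_mul (inv_nonneg.2 (hA₀ x hx)), inv_mul_cancel₀ hx₀, Real.sqrt_one]

theorem PosSemidef.msqrt_mul_pinv_mul_self (hA : A.PosSemidef) :
    msqrt A * (pinv A * A) = msqrt A := by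
  have hA₀ : ∀ x ∈ spectrum ℝ A, 0 ≤ x := fun x hx => spectrum_nonneg_of_nonneg hA.nonneg hx
  rw [← cfc_id' ℝ A hA.isHermitian.isSelfAdjoint, pinv_cfc, msqrt_cfc _ _ hA₀, cfc_mul_cfc,
    cfc_mul_cfc]
  refine cfc_congr fun x _ => ?_
  rcases eq_or_ne x 0 with rfl | hx₀
  · simp
  · rw [inv_mul_cancel₀ hx₀, mul_one]

end Matrix

-- Douglas' lemma, with the contraction `X H^†`.
theorem exists_contraction_of_posSemidef_sub {p q : ℕ} {H : Matrix (Fin q) (Fin q) ℝ}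
    (hH : H.IsHermitian) {X : Matrix (Fin p) (Fin q) ℝ} (hX : (Hᵀ * H - Xᵀ * X).PosSemidef) :
    ∃ S : Matrix (Fin p) (Fin q) ℝ, (1 - Sᵀ * S).PosSemidef ∧ X = S * H := by
  set K := pinv H
  have hK : IsMoorePenroseInverse H K := hH.isMoorePenroseInverse_pinv
  have hKt : Kᵀ = K := hH.transpose_pinv
  set E := 1 - K * H with hE
  have hHE : H * E = 0 := by
    rw [hE, Matrix.mul_sub, Matrix.mul_one, ← Matrix.mul_assoc, hK.1, sub_self]
  have hXE : X * E = 0 := by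
    refine eq_zero_of_posSemidef_neg_transpose_mul_self ?_
    have : -((X * E)ᵀ * (X * E)) = Eᵀ * (Hᵀ * H - Xᵀ * X) * E :=
      calc -((X * E)ᵀ * (X * E)) = (H * E)ᵀ * (H * E) - (X * E)ᵀ * (X * E) := by
            rw [hHE, Matrix.mul_zero, zero_sub]
        _ = Eᵀ * (Hᵀ * H - Xᵀ * X) * E := by
            simp only [transpose_mul, Matrix.mul_sub, Matrix.sub_mul, Matrix.mul_assoc]
    rw [this]
    exact hX.transpose_mul_mul_same E
  have hKHHK : Kᵀ * (Hᵀ * H) * K = K * H :=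
    calc Kᵀ * (Hᵀ * H) * K = K * H * (H * K) := by
          rw [hKt, hH.transpose_eq]; simp only [Matrix.mul_assoc]
      _ = K * H := by
          rw [← hK.2.2.1, transpose_mul, hKt, hH.transpose_eq, ← Matrix.mul_assoc, hK.2.1]
  refine ⟨X * K, ?_, ?_⟩
  · have : 1 - (X * K)ᵀ * (X * K) = E + Kᵀ * (Hᵀ * H - Xᵀ * X) * K := by
      rw [Matrix.mul_sub, Matrix.sub_mul, hKHHK, hE, transpose_mul]
      simp only [Matrix.mul_assoc]
      abel
    rw [this]
    exact hK.posSemidef_one_sub_mul.add (hX.transpose_mul_mul_same K)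
  · rwa [hE, Matrix.mul_sub, Matrix.mul_one, sub_eq_zero, ← Matrix.mul_assoc] at hXE

theorem posSemidef_sub_transpose_mul_mul_iff {p q : ℕ} {N : Matrix (Fin p) (Fin p) ℝ}
    {C : Matrix (Fin q) (Fin q) ℝ} (hN : N.PosSemidef) (hC : C.PosSemidef)
    (W : Matrix (Fin p) (Fin q) ℝ) :
    (C - Wᵀ * N * W).PosSemidef ↔ ∃ S T : Matrix (Fin p) (Fin q) ℝ,
      (1 - Sᵀ * S).PosSemidef ∧
      W = msqrt (pinv N) * S * msqrt C + (1 - pinv N * N) * T := by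
  set G := msqrt N
  set R := msqrt (pinv N)
  set H := msqrt C
  set Q := pinv N * N
  have hQ : IsMoorePenroseInverse N (pinv N) := hN.isHermitian.isMoorePenroseInverse_pinv
  have hH : H.IsHermitian := (posSemidef_msqrt C).isHermitian
  have hGt : Gᵀ = G := (posSemidef_msqrt N).isHermitian.transpose_eq
  have hRt : Rᵀ = R := (posSemidef_msqrt (pinv N)).isHermitian.transpose_eq
  have hGG : G * G = N := hN.msqrt_mul_self
  have hRG : R * G = Q := hN.msqrt_pinv_mul_msqrt
  have hGQ : G * Q = G := hN.msqrt_mul_pinv_mul_self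
  have hC' : C = Hᵀ * H := by rw [hH.transpose_eq, hC.msqrt_mul_self]
  have hN' : Wᵀ * N * W = (G * W)ᵀ * (G * W) := by
    rw [transpose_mul, hGt, ← hGG]
    simp only [Matrix.mul_assoc]
  rw [hC', hN']
  constructor
  · intro h
    obtain ⟨S, hS, hGW⟩ := exists_contraction_of_posSemidef_sub hH h
    refine ⟨S, W, hS, ?_⟩
    rw [Matrix.mul_assoc R, ← hGW, ← Matrix.mul_assoc, hRG, Matrix.sub_mul, Matrix.one_mul,
      add_sub_cancel]
  · rintro ⟨S, T, hS, rfl⟩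
    have hGR : G * R = Q := by rw [← hGt, ← hRt, ← transpose_mul, hRG, hQ.2.2.2]
    have hGW : G * (R * S * H + (1 - Q) * T) = Q * (S * H) := by
      rw [Matrix.mul_add, ← Matrix.mul_assoc G (1 - Q), Matrix.mul_sub, Matrix.mul_one, hGQ,
        sub_self, Matrix.zero_mul, add_zero, ← Matrix.mul_assoc, ← Matrix.mul_assoc, hGR,
        Matrix.mul_assoc]
    have hQQ : Qᵀ * Q = Q := by rw [hQ.2.2.2, ← Matrix.mul_assoc, hQ.2.1]
    have : Hᵀ * H - (Q * (S * H))ᵀ * (Q * (S * H)) =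
        Hᵀ * (1 - Sᵀ * S) * H + (S * H)ᵀ * (1 - Q) * (S * H) := by
      rw [transpose_mul Q, Matrix.mul_assoc, ← Matrix.mul_assoc Qᵀ, hQQ]
      simp only [transpose_mul, Matrix.mul_sub, Matrix.sub_mul, Matrix.mul_one, Matrix.mul_assoc]
      abel
    rw [hGW, this]
    exact (hS.transpose_mul_mul_same H).add (hQ.posSemidef_one_sub_mul.transpose_mul_mul_same _)

theorem mul_pinv_mul_self_of_ker {q r : ℕ} {D : Matrix (Fin r) (Fin r) ℝ}
    {A : Matrix (Fin q) (Fin r) ℝ} (hD : D.IsHermitian)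
    (hker : ∀ x : Fin r → ℝ, D *ᵥ x = 0 → A *ᵥ x = 0) : A * pinv D * D = A := by
  have hDE : D * (1 - pinv D * D) = 0 := by
    rw [Matrix.mul_sub, Matrix.mul_one, ← Matrix.mul_assoc, hD.isMoorePenroseInverse_pinv.1,
      sub_self]
  have hAE : A * (1 - pinv D * D) = 0 := by
    refine Matrix.ext_iff_mulVec.mpr fun v => ?_
    rw [zero_mulVec, ← mulVec_mulVec]
    exact hker _ (by rw [mulVec_mulVec, hDE, zero_mulVec])
  rwa [Matrix.mul_sub, Matrix.mul_one, sub_eq_zero, eq_comm, ← Matrix.mul_assoc] at hAE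

section QMI
variable {q r : ℕ} (P : Matrix (Fin q ⊕ Fin r) (Fin q ⊕ Fin r) ℝ)

theorem qmi_eq (Z : Matrix (Fin r) (Fin q) ℝ) :
    qmi P Z = P.toBlocks₁₁ + P.toBlocks₁₂ * Z + Zᵀ * P.toBlocks₂₁ + Zᵀ * P.toBlocks₂₂ * Z := by
  -- `qmi` was elaborated with `CStarMatrix`'s multiplication; restate it with `Matrix`'s.
  let I : Matrix (Fin q ⊕ Fin r) (Fin q) ℝ := fromRows 1 Z
  rw [show qmi P Z = Iᵀ * P * I from rfl]
  conv_lhs => rw [← fromBlocks_toBlocks P]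
  rw [Matrix.mul_assoc, fromBlocks_mul_fromRows, transpose_fromRows, fromCols_mul_fromRows]
  simp only [transpose_one, Matrix.mul_one, Matrix.one_mul, Matrix.mul_add, Matrix.mul_assoc]
  abel

variable {P}

theorem qmi_eq_schurC_sub (hP : P.IsSymm) (hD : P.toBlocks₂₂.IsHermitian)
    (hker : ∀ x : Fin r → ℝ, P.toBlocks₂₂ *ᵥ x = 0 → P.toBlocks₁₂ *ᵥ x = 0)
    (Z : Matrix (Fin r) (Fin q) ℝ) :
    qmi P Z = schurC P - (Z + pinv P.toBlocks₂₂ * P.toBlocks₂₁)ᵀ * (-P.toBlocks₂₂) *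
      (Z + pinv P.toBlocks₂₂ * P.toBlocks₂₁) := by
  rw [qmi_eq, schurC, hP.toBlocks₂₁_eq]
  set A := P.toBlocks₁₂
  set D := P.toBlocks₂₂
  have hAED : ∀ Y : Matrix (Fin r) (Fin q) ℝ, A * (pinv D * (D * Y)) = A * Y := fun Y => by
    rw [← Matrix.mul_assoc, ← Matrix.mul_assoc, mul_pinv_mul_self_of_ker hD hker]
  have hDEA : D * (pinv D * Aᵀ) = Aᵀ := by
    simpa only [transpose_mul, hD.transpose_eq, hD.transpose_pinv, Matrix.mul_assoc] using
      congrArg transpose (mul_pinv_mul_self_of_ker hD hker)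
  simp only [transpose_add, transpose_mul, transpose_transpose, hD.transpose_pinv,
    Matrix.add_mul, Matrix.mul_add, Matrix.mul_neg, Matrix.neg_mul, Matrix.mul_assoc, hAED, hDEA]
  abel

end QMI

/-- Parameterization of `Z_r(Π)` for `Π ∈ Π_{q,r}`:
`Z ∈ Z_r(Π)` iff `Z = −Π₂₂^†Π₂₁ + ((−Π₂₂)^†)^{1/2} S (Π|Π₂₂)^{1/2} + (I − Π₂₂^†Π₂₂)T`
for some `S, T` with `SᵀS ⪯ I`. -/
theorem stmt_5 {q r : ℕ} (P : Matrix (Fin q ⊕ Fin r) (Fin q ⊕ Fin r) ℝ) (hP : memPi P)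
    (Z : Matrix (Fin r) (Fin q) ℝ) :
    Z ∈ ZrSet P ↔ ∃ S T : Matrix (Fin r) (Fin q) ℝ,
      ((1 : Matrix (Fin q) (Fin q) ℝ) - Sᵀ * S).PosSemidef ∧
      Z = -(pinv P.toBlocks₂₂ * P.toBlocks₂₁)
          + msqrt (pinv (-P.toBlocks₂₂)) * S * msqrt (schurC P)
          + ((1 : Matrix (Fin r) (Fin r) ℝ) - pinv P.toBlocks₂₂ * P.toBlocks₂₂) * T := by
  obtain ⟨hsymm, hN, hschur, hker⟩ := hP
  have hD : P.toBlocks₂₂.IsHermitian := by simpa using hN.isHermitian.neg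
  have hQ : pinv (-P.toBlocks₂₂) * -P.toBlocks₂₂ = pinv P.toBlocks₂₂ * P.toBlocks₂₂ := by
    rw [hD.pinv_neg, neg_mul_neg]
  rw [ZrSet, Set.mem_ofPred_eq, qmi_eq_schurC_sub hsymm hD hker,
    posSemidef_sub_transpose_mul_mul_iff hN hschur, hQ]
  refine exists₂_congr fun S T => and_congr_right' ?_
  rw [add_assoc, eq_neg_add_iff_add_eq, add_comm (pinv _ * _)]
end

section
/- Let M, N ∈ S^{q+r} with N ∈ Π_{q,r}, and assume N₂₂ is negative definite. Then the following are equivalent: (i) Z_r(N) ⊆ Z_r⁺(M); (ii) xᵀ M x > 0 for all nonzero x ∈ ℝ^{q+r} satisfying xᵀ N x ≥ 0. -/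
/-!
Write `x = (u, v)` and complete the square in `v` around `N₂₂`: with `K = N₂₂⁻¹ N₂₁`,
`xᵀ N x = uᵀ (N|N₂₂) u + wᵀ N₂₂ w` where `w = v + K u`. If `xᵀ N x ≥ 0`, the rank-one choice
`Z = σ⁻¹ w uᵀ (N|N₂₂) - K`, `σ = uᵀ (N|N₂₂) u`, maps `u` to `v` (if `σ = 0` then `w = 0`, as
`N₂₂ ≺ 0`) and solves the nonstrict QMI of `N`, by Cauchy–Schwarz for the positive semidefinite
Schur complement. So the nonzero vectors with `xᵀ N x ≥ 0` are exactly the vectors `[I; Z] u`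
with `u ≠ 0` and `Z ∈ Z_r(N)`, and both conditions of the theorem say that `M` is positive on
them.
-/

open Matrix
open scoped Classical

lemma pinv_eq_inv {n : ℕ} (A : Matrix (Fin n) (Fin n) ℝ) (hA : IsUnit A.det) :
    pinv A = A⁻¹ := by
  have hex : ∃ B : Matrix (Fin n) (Fin n) ℝ,
      A * B * A = A ∧ B * A * B = B ∧ (A * B)ᵀ = A * B ∧ (B * A)ᵀ = B * A :=
    ⟨A⁻¹, by simp [mul_nonsing_inv A hA], by simp [nonsing_inv_mul A hA],
      by simp [mul_nonsing_inv A hA], by simp [nonsing_inv_mul A hA]⟩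
  rw [pinv, dif_pos hex]
  calc hex.choose = A⁻¹ * (A * hex.choose * A) * A⁻¹ := by
        simp only [Matrix.mul_assoc, mul_nonsing_inv A hA, Matrix.mul_one]
        rw [← Matrix.mul_assoc, nonsing_inv_mul A hA, Matrix.one_mul]
    _ = A⁻¹ := by rw [hex.choose_spec.1, nonsing_inv_mul A hA, Matrix.one_mul]

namespace Matrix

variable {m n : Type*} [Fintype m] [Fintype n]

/-- Cauchy–Schwarz for `S ⪰ 0`; when `xᵀ S x = 0` the left side is `0` by the convention
`a / 0 = 0`. -/
theorem PosSemidef.sq_dotProduct_mulVec_div_le {S : Matrix m m ℝ} (hS : S.PosSemidef)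
    (x y : m → ℝ) : (x ⬝ᵥ (S *ᵥ y)) ^ 2 / (x ⬝ᵥ (S *ᵥ x)) ≤ y ⬝ᵥ (S *ᵥ y) := by
  have hnonneg : ∀ z, 0 ≤ z ⬝ᵥ (S *ᵥ z) := fun z => by
    simpa using hS.dotProduct_mulVec_nonneg z
  refine div_le_of_le_mul₀ (hnonneg x) (hnonneg y) ?_
  have hsymm : y ⬝ᵥ (S *ᵥ x) = x ⬝ᵥ (S *ᵥ y) := by
    rw [dotProduct_mulVec, ← mulVec_transpose, dotProduct_comm,
      (isHermitian_iff_isSymm.mp hS.isHermitian).eq]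
  have := LinearMap.BilinForm.apply_mul_apply_le_of_forall_zero_le (toLinearMap₂' ℝ S)
    (by simpa [toLinearMap₂'_apply'] using hnonneg) x y
  simp only [toLinearMap₂'_apply', hsymm] at this
  linarith

theorem sumElim_dotProduct_mulVec_sumElim_eq_schur [DecidableEq n]
    {P : Matrix (m ⊕ n) (m ⊕ n) ℝ} (hP : P.IsSymm) (hD : IsUnit P.toBlocks₂₂)
    (y : m → ℝ) (z : n → ℝ) :
    Sum.elim y z ⬝ᵥ (P *ᵥ Sum.elim y z) =
      ((P.toBlocks₂₂⁻¹ * P.toBlocks₂₁) *ᵥ y + z) ⬝ᵥ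
          (P.toBlocks₂₂ *ᵥ ((P.toBlocks₂₂⁻¹ * P.toBlocks₂₁) *ᵥ y + z)) +
        y ⬝ᵥ ((P.toBlocks₁₁ - P.toBlocks₁₂ * P.toBlocks₂₂⁻¹ * P.toBlocks₂₁) *ᵥ y) := by
  let _ := hD.invertible
  rw [← fromBlocks_toBlocks P, isSymm_fromBlocks_iff] at hP
  obtain ⟨-, hBC, -, hDsymm⟩ := hP
  have h := schur_complement_eq₂₂ P.toBlocks₁₁ P.toBlocks₁₂ y z
    (isHermitian_iff_isSymm.mpr hDsymm)
  rw [conjTranspose_eq_transpose_of_trivial, hBC, fromBlocks_toBlocks] at h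
  simpa only [star_trivial, ← dotProduct_mulVec, Matrix.mul_assoc] using h

theorem exists_mulVec_eq_and_forall_add_quadForm_nonneg {S : Matrix m m ℝ} {D : Matrix n n ℝ}
    (hS : S.PosSemidef) (hD : (-D).PosDef) {u : m → ℝ} {w : n → ℝ}
    (hwu : -(w ⬝ᵥ (D *ᵥ w)) ≤ u ⬝ᵥ (S *ᵥ u)) :
    ∃ Y : Matrix n m ℝ, Y *ᵥ u = w ∧
      ∀ y, 0 ≤ y ⬝ᵥ (S *ᵥ y) + (Y *ᵥ y) ⬝ᵥ (D *ᵥ (Y *ᵥ y)) := by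
  set σ := u ⬝ᵥ (S *ᵥ u)
  have hY : ∀ y, ((σ⁻¹ • vecMulVec w (u ᵥ* S)) *ᵥ y) = (σ⁻¹ * (u ⬝ᵥ (S *ᵥ y))) • w := by
    intro y
    rw [smul_mulVec, vecMulVec_mulVec, op_smul_eq_smul, smul_smul, ← dotProduct_mulVec]
  refine ⟨σ⁻¹ • vecMulVec w (u ᵥ* S), ?_, fun y => ?_⟩
  · rw [hY]
    rcases eq_or_ne w 0 with hw | hw
    · simp [hw]
    have hσ : 0 < σ := by
      have := hD.dotProduct_mulVec_pos hw
      simp only [star_trivial, neg_mulVec, dotProduct_neg] at this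
      linarith
    rw [inv_mul_cancel₀ hσ.ne', one_smul]
  · rw [hY, mulVec_smul, dotProduct_smul, smul_dotProduct, smul_eq_mul, smul_eq_mul]
    set a := u ⬝ᵥ (S *ᵥ y)
    have hσa : (σ⁻¹ * a) * ((σ⁻¹ * a) * σ) = a ^ 2 / σ := by
      rcases eq_or_ne σ 0 with h | h
      · simp [h]
      · field_simp
    have hCS : a ^ 2 / σ ≤ y ⬝ᵥ (S *ᵥ y) := hS.sq_dotProduct_mulVec_div_le u y
    nlinarith [mul_le_mul_of_nonneg_left hwu (mul_self_nonneg (σ⁻¹ * a))]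

end Matrix

section QMI

variable {q r : ℕ} {P : Matrix (Fin q ⊕ Fin r) (Fin q ⊕ Fin r) ℝ}

/-- The unannotated `1` in `qmi` makes its last factor elaborate as a `CStarMatrix`, which
blocks the `Matrix` API; this restates `qmi` with the `Matrix` product. -/
theorem qmi_eq_mul (Z : Matrix (Fin r) (Fin q) ℝ) :
    qmi P Z = (fromRows (1 : Matrix (Fin q) (Fin q) ℝ) Z)ᵀ * P *
      fromRows (1 : Matrix (Fin q) (Fin q) ℝ) Z :=
  rfl

theorem dotProduct_qmi_mulVec (Z : Matrix (Fin r) (Fin q) ℝ) (u : Fin q → ℝ) :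
    u ⬝ᵥ (qmi P Z *ᵥ u) = Sum.elim u (Z *ᵥ u) ⬝ᵥ (P *ᵥ Sum.elim u (Z *ᵥ u)) := by
  rw [qmi_eq_mul, ← mulVec_mulVec, ← mulVec_mulVec, dotProduct_mulVec, vecMul_transpose,
    fromRows_mulVec, one_mulVec]

theorem isHermitian_qmi (hP : P.IsSymm) (Z : Matrix (Fin r) (Fin q) ℝ) :
    (qmi P Z).IsHermitian := by
  rw [isHermitian_iff_isSymm, IsSymm, qmi_eq_mul, transpose_mul, transpose_mul,
    transpose_transpose, hP.eq, Matrix.mul_assoc]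

theorem mem_ZrSet_iff (hP : P.IsSymm) {Z : Matrix (Fin r) (Fin q) ℝ} :
    Z ∈ ZrSet P ↔ ∀ u, 0 ≤ Sum.elim u (Z *ᵥ u) ⬝ᵥ (P *ᵥ Sum.elim u (Z *ᵥ u)) := by
  simp only [ZrSet, Set.mem_ofPred_eq, posSemidef_iff_dotProduct_mulVec, star_trivial,
    dotProduct_qmi_mulVec, isHermitian_qmi hP, true_and]

theorem mem_ZrPlusSet_iff (hP : P.IsSymm) {Z : Matrix (Fin r) (Fin q) ℝ} :
    Z ∈ ZrPlusSet P ↔ ∀ u ≠ 0, 0 < Sum.elim u (Z *ᵥ u) ⬝ᵥ (P *ᵥ Sum.elim u (Z *ᵥ u)) := by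
  simp only [ZrPlusSet, Set.mem_ofPred_eq, posDef_iff_dotProduct_mulVec, star_trivial,
    dotProduct_qmi_mulVec, isHermitian_qmi hP, true_and]

theorem exists_mem_ZrSet_mulVec_eq (hP : P.IsSymm) (hP22 : (-P.toBlocks₂₂).PosDef)
    (hS : (schurC P).PosSemidef) {u : Fin q → ℝ} {v : Fin r → ℝ}
    (huv : 0 ≤ Sum.elim u v ⬝ᵥ (P *ᵥ Sum.elim u v)) :
    ∃ Z ∈ ZrSet P, Z *ᵥ u = v := by
  have hD : IsUnit P.toBlocks₂₂ := by simpa using hP22.isUnit.neg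
  have hschur : schurC P = P.toBlocks₁₁ - P.toBlocks₁₂ * P.toBlocks₂₂⁻¹ * P.toBlocks₂₁ := by
    rw [schurC, pinv_eq_inv _ ((isUnit_iff_isUnit_det _).mp hD)]
  set K := P.toBlocks₂₂⁻¹ * P.toBlocks₂₁
  have hform := sumElim_dotProduct_mulVec_sumElim_eq_schur hP hD
  rw [← hschur] at hform
  obtain ⟨Y, hYu, hY⟩ := exists_mulVec_eq_and_forall_add_quadForm_nonneg hS hP22
    (w := K *ᵥ u + v) (by linarith [hform u v])
  refine ⟨Y - K, (mem_ZrSet_iff hP).mpr fun y => ?_, ?_⟩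
  · rw [hform, sub_mulVec, add_sub_cancel, add_comm]
    exact hY y
  · rw [sub_mulVec, hYu, add_sub_cancel_left]

end QMI

/-- For symmetric `M` and `N ∈ Π_{q,r}` with `N₂₂ ≺ 0`,
`Z_r(N) ⊆ Z_r⁺(M)` iff `xᵀMx > 0` for all nonzero `x` with `xᵀNx ≥ 0`. -/
theorem stmt_12 {q r : ℕ} (M N : Matrix (Fin q ⊕ Fin r) (Fin q ⊕ Fin r) ℝ)
    (hM : M.IsSymm) (hN : memPi N) (hN22 : (-N.toBlocks₂₂).PosDef) :
    ZrSet N ⊆ ZrPlusSet M ↔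
      ∀ x : Fin q ⊕ Fin r → ℝ, x ≠ 0 → 0 ≤ x ⬝ᵥ (N *ᵥ x) → 0 < x ⬝ᵥ (M *ᵥ x) := by
  obtain ⟨hNsymm, -, hS, -⟩ := hN
  constructor
  · intro hsub x hx hxN
    rw [← Sum.elim_comp_inl_inr x] at hx hxN ⊢
    obtain ⟨Z, hZ, hZu⟩ := exists_mem_ZrSet_mulVec_eq hNsymm hN22 hS hxN
    have hu : x ∘ Sum.inl ≠ 0 := by
      rintro hu
      exact hx (by rw [← hZu, hu, mulVec_zero, Sum.elim_zero_zero])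
    simpa only [hZu] using (mem_ZrPlusSet_iff hM).mp (hsub hZ) _ hu
  · intro hpos Z hZ
    refine (mem_ZrPlusSet_iff hM).mpr fun u hu => hpos _ ?_ ((mem_ZrSet_iff hNsymm).mp hZ u)
    exact fun h => hu (by simpa using congrArg (· ∘ Sum.inl) h)
end
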